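/- Let d ≥ 2. Let V be a d×d complex upper triangular matrix with V_{ii} = 1 for all i and V_{i,i+1} ≠ 0 for all i ∈ {1,…,d−1}, and let B be an invertible diagonal matrix with diagonal entries μ_1,…,μ_d. Set r := max_{1≤i≤d−1} |μ_{i+1}/μ_i| and ‖A‖₁ := Σ_{i,j} |A_{ij}|. Then: (a) r ≤ (min_{1≤i≤d−1} |V_{i,i+1}|)^{−1} · ‖B^{−1}VB − 1‖₁; and (b) if r ≤ 1, then ‖B^{−1}VB − 1‖₁ ≤ ‖V‖₁ · r. Consequently, for any sequence (B_n) of invertible diagonal matrices with diagonal entries μ_1(B_n),…,μ_d(B_n), one has B_n^{−1}VB_n → 1 as n → ∞ if and only if μ_{i+1}(B_n)/μ_i(B_n) → 0 for every i ∈ {1,…,d−1}. -/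

import Mathlib

/-!
Conjugating `V` by `B = diagonal μ` scales its entries: `(B⁻¹ V B) i j = V i j * (μ j / μ i)`.
Since `V` is unitriangular, `B⁻¹ V B - 1` only has the entries `V i j * (μ j / μ i)` with `i < j`.
The consecutive entries give (a) and the "only if" direction, because `V i (i+1) ≠ 0`; for the
converse and (b), every ratio `μ j / μ i` with `i < j` is a product of consecutive ratios, so it
inherits their smallness.
-/

noncomputable section

/-- The entrywise `ℓ¹`-norm of a `d × d` complex matrix: `‖A‖₁ = ∑_{i,j} |A i j|`. -/
noncomputable def norm1 (d : ℕ) (A : Matrix (Fin d) (Fin d) ℂ) : ℝ :=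
  ∑ i : Fin d, ∑ j : Fin d, ‖A i j‖

open Filter Topology Matrix

section

variable {d : ℕ} {μ : Fin d → ℂ} {V : Matrix (Fin d) (Fin d) ℂ}

theorem norm_apply_le_norm1 (A : Matrix (Fin d) (Fin d) ℂ) (i j : Fin d) :
    ‖A i j‖ ≤ norm1 d A :=
  calc ‖A i j‖ ≤ ∑ j', ‖A i j'‖ :=
        Finset.single_le_sum (fun _ _ => norm_nonneg _) (Finset.mem_univ j)
    _ ≤ norm1 d A :=
        Finset.single_le_sum (f := fun i' => ∑ j', ‖A i' j'‖)
          (fun _ _ => Finset.sum_nonneg fun _ _ => norm_nonneg _) (Finset.mem_univ i)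

theorem norm1_le_norm1_mul {A B : Matrix (Fin d) (Fin d) ℂ} {r : ℝ}
    (h : ∀ i j, ‖A i j‖ ≤ ‖B i j‖ * r) : norm1 d A ≤ norm1 d B * r := by
  simp only [norm1, Finset.sum_mul]
  gcongr with i _ j _
  exact h i j

theorem Fin.cocycle_prop_of_lt {α : Type*} [Mul α] (P : α → Prop)
    (hP : ∀ a b, P a → P b → P (a * b)) (ρ : Fin d → Fin d → α)
    (hρ : ∀ i j k, ρ i k = ρ j k * ρ i j) (hsucc : ∀ i j : Fin d, (j : ℕ) = i + 1 → P (ρ i j))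
    {i j : Fin d} (hij : i < j) : P (ρ i j) := by
  obtain ⟨k, hk⟩ : ∃ k, (j : ℕ) = i + k + 1 := ⟨j - i - 1, by rw [Fin.lt_def] at hij; omega⟩
  induction k generalizing j with
  | zero => exact hsucc i j hk
  | succ k ih =>
    let m : Fin d := ⟨i + k + 1, by omega⟩
    rw [hρ i m j]
    exact hP _ _ (hsucc m j (by simp only [m]; omega)) (ih (Fin.lt_def.2 (by simp [m])) rfl)

theorem Matrix.tendsto_nhds_iff {ι m n R : Type*} [TopologicalSpace R] {f : ι → Matrix m n R}
    {l : Filter ι} {A : Matrix m n R} :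
    Tendsto f l (𝓝 A) ↔ ∀ i j, Tendsto (fun x => f x i j) l (𝓝 (A i j)) :=
  tendsto_pi_nhds.trans (forall_congr' fun _ => tendsto_pi_nhds)

theorem inv_diagonal_mul_mul_diagonal_apply (hμ : ∀ i, μ i ≠ 0) (i j : Fin d) :
    ((diagonal μ)⁻¹ * V * diagonal μ) i j = V i j * (μ j / μ i) := by
  have hinv : (diagonal μ)⁻¹ = diagonal μ⁻¹ :=
    inv_eq_left_inv (by simp [diagonal_mul_diagonal, inv_mul_cancel₀ (hμ _)])
  rw [hinv, mul_diagonal, diagonal_mul, Pi.inv_apply]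
  ring

theorem inv_diagonal_mul_mul_diagonal_sub_one_apply_of_ne (hμ : ∀ i, μ i ≠ 0) {i j : Fin d}
    (hij : i ≠ j) : ((diagonal μ)⁻¹ * V * diagonal μ - 1) i j = V i j * (μ j / μ i) := by
  rw [Matrix.sub_apply, inv_diagonal_mul_mul_diagonal_apply hμ, one_apply_ne hij, sub_zero]

theorem inv_diagonal_mul_mul_diagonal_sub_one_apply_of_le
    (hVlow : ∀ i j : Fin d, (j : ℕ) < (i : ℕ) → V i j = 0) (hVdiag : ∀ i : Fin d, V i i = 1)
    (hμ : ∀ i, μ i ≠ 0) {i j : Fin d} (hji : j ≤ i) :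
    ((diagonal μ)⁻¹ * V * diagonal μ - 1) i j = 0 := by
  rcases hji.lt_or_eq with hlt | rfl
  · rw [inv_diagonal_mul_mul_diagonal_sub_one_apply_of_ne hμ hlt.ne', hVlow i j hlt, zero_mul]
  · rw [Matrix.sub_apply, inv_diagonal_mul_mul_diagonal_apply hμ, hVdiag, div_self (hμ j), one_mul,
      one_apply_eq, sub_self]

theorem le_inv_mul_norm1_inv_diagonal_mul_mul_diagonal_sub_one
    (hVsup : ∀ i j : Fin d, (j : ℕ) = (i : ℕ) + 1 → V i j ≠ 0) (hμ : ∀ i, μ i ≠ 0) {r c : ℝ}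
    (hr : IsGreatest {x : ℝ | ∃ i j : Fin d, (j : ℕ) = (i : ℕ) + 1 ∧ x = ‖μ j / μ i‖} r)
    (hc : IsLeast {x : ℝ | ∃ i j : Fin d, (j : ℕ) = (i : ℕ) + 1 ∧ x = ‖V i j‖} c) :
    r ≤ c⁻¹ * norm1 d ((diagonal μ)⁻¹ * V * diagonal μ - 1) := by
  obtain ⟨i, j, hij, rfl⟩ := hr.1
  obtain ⟨i', j', hij', rfl⟩ := hc.1
  have hc0 : 0 < ‖V i' j'‖ := norm_pos_iff.2 (hVsup i' j' hij')
  have hne : i ≠ j := fun h => by subst h; omega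
  rw [inv_mul_eq_div, le_div_iff₀ hc0, mul_comm]
  calc ‖V i' j'‖ * ‖μ j / μ i‖ ≤ ‖V i j‖ * ‖μ j / μ i‖ := by
        gcongr; exact hc.2 ⟨i, j, hij, rfl⟩
    _ = ‖((diagonal μ)⁻¹ * V * diagonal μ - 1) i j‖ := by
        rw [inv_diagonal_mul_mul_diagonal_sub_one_apply_of_ne hμ hne, norm_mul]
    _ ≤ _ := norm_apply_le_norm1 _ i j

theorem norm1_inv_diagonal_mul_mul_diagonal_sub_one_le
    (hVlow : ∀ i j : Fin d, (j : ℕ) < (i : ℕ) → V i j = 0) (hVdiag : ∀ i : Fin d, V i i = 1)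
    (hμ : ∀ i, μ i ≠ 0) {r : ℝ} (hr0 : 0 ≤ r) (hr1 : r ≤ 1)
    (hr : ∀ i j : Fin d, (j : ℕ) = (i : ℕ) + 1 → ‖μ j / μ i‖ ≤ r) :
    norm1 d ((diagonal μ)⁻¹ * V * diagonal μ - 1) ≤ norm1 d V * r := by
  refine norm1_le_norm1_mul fun i j => ?_
  rcases lt_or_ge i j with hij | hji
  · have hratio : ‖μ j / μ i‖ ≤ r :=
      Fin.cocycle_prop_of_lt (fun a : ℂ => ‖a‖ ≤ r)
        (fun a b ha hb => by
          rw [norm_mul]; nlinarith [norm_nonneg a, norm_nonneg b])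
        (fun i j => μ j / μ i) (fun i j k => (div_mul_div_cancel₀ (hμ j)).symm) hr hij
    rw [inv_diagonal_mul_mul_diagonal_sub_one_apply_of_ne hμ hij.ne, norm_mul]
    gcongr
  · rw [inv_diagonal_mul_mul_diagonal_sub_one_apply_of_le hVlow hVdiag hμ hji, norm_zero]
    positivity

theorem tendsto_inv_diagonal_mul_mul_diagonal_nhds_one_iff
    (hVlow : ∀ i j : Fin d, (j : ℕ) < (i : ℕ) → V i j = 0) (hVdiag : ∀ i : Fin d, V i i = 1)
    (hVsup : ∀ i j : Fin d, (j : ℕ) = (i : ℕ) + 1 → V i j ≠ 0)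
    {μs : ℕ → Fin d → ℂ} (hμs : ∀ n i, μs n i ≠ 0) :
    Tendsto (fun n => (diagonal (μs n))⁻¹ * V * diagonal (μs n)) atTop (𝓝 1) ↔
      ∀ i j : Fin d, (j : ℕ) = (i : ℕ) + 1 → Tendsto (fun n => μs n j / μs n i) atTop (𝓝 0) := by
  rw [← tendsto_sub_nhds_zero_iff, Matrix.tendsto_nhds_iff]
  constructor
  · intro h i j hij
    have hne : i ≠ j := fun h => by subst h; omega
    simpa only [inv_diagonal_mul_mul_diagonal_sub_one_apply_of_ne (hμs _) hne, Matrix.zero_apply,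
      mul_zero, inv_mul_cancel_left₀ (hVsup i j hij)] using (h i j).const_mul (V i j)⁻¹
  · intro h i j
    rcases lt_or_ge i j with hij | hji
    · have hratio : Tendsto (fun n => μs n j / μs n i) atTop (𝓝 0) :=
        Fin.cocycle_prop_of_lt (fun f : ℕ → ℂ => Tendsto f atTop (𝓝 0))
          (fun f g hf hg => by rw [← mul_zero (0 : ℂ)]; exact hf.mul hg)
          (fun i j n => μs n j / μs n i)
          (fun i j k => funext fun n => (div_mul_div_cancel₀ (hμs n j)).symm) h hij
      simp only [inv_diagonal_mul_mul_diagonal_sub_one_apply_of_ne (hμs _) hij.ne]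
      simpa using hratio.const_mul (V i j)
    · simp only [inv_diagonal_mul_mul_diagonal_sub_one_apply_of_le hVlow hVdiag (hμs _) hji]
      exact tendsto_const_nhds

end

theorem statement_19_general (d : ℕ) (V : Matrix (Fin d) (Fin d) ℂ)
    (hVlow : ∀ i j : Fin d, (j : ℕ) < (i : ℕ) → V i j = 0)
    (hVdiag : ∀ i : Fin d, V i i = 1)
    (hVsup : ∀ i j : Fin d, (j : ℕ) = (i : ℕ) + 1 → V i j ≠ 0)
    (μ : Fin d → ℂ) (hμ : ∀ i, μ i ≠ 0)
    (r c : ℝ)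
    (hr : IsGreatest {x : ℝ | ∃ i j : Fin d, (j : ℕ) = (i : ℕ) + 1 ∧
      x = ‖μ j / μ i‖} r)
    (hc : IsLeast {x : ℝ | ∃ i j : Fin d, (j : ℕ) = (i : ℕ) + 1 ∧
      x = ‖V i j‖} c) :
    -- (a)
    r ≤ c⁻¹ * norm1 d ((Matrix.diagonal μ)⁻¹ * V * Matrix.diagonal μ - 1) ∧
    -- (b)
    (r ≤ 1 → norm1 d ((Matrix.diagonal μ)⁻¹ * V * Matrix.diagonal μ - 1) ≤ norm1 d V * r) ∧
    -- consequence
    (∀ μs : ℕ → Fin d → ℂ, (∀ n i, μs n i ≠ 0) →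
      (Filter.Tendsto (fun n => (Matrix.diagonal (μs n))⁻¹ * V * Matrix.diagonal (μs n))
          Filter.atTop (nhds 1) ↔
        ∀ i j : Fin d, (j : ℕ) = (i : ℕ) + 1 →
          Filter.Tendsto (fun n => μs n j / μs n i) Filter.atTop (nhds 0))) := by
  have hr0 : 0 ≤ r := by
    obtain ⟨i, j, -, rfl⟩ := hr.1
    exact norm_nonneg _
  exact ⟨le_inv_mul_norm1_inv_diagonal_mul_mul_diagonal_sub_one hVsup hμ hr hc,
    fun hr1 => norm1_inv_diagonal_mul_mul_diagonal_sub_one_le hVlow hVdiag hμ hr0 hr1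
      fun i j hij => hr.2 ⟨i, j, hij, rfl⟩,
    fun _ hμs => tendsto_inv_diagonal_mul_mul_diagonal_nhds_one_iff hVlow hVdiag hVsup hμs⟩

theorem statement_19 (d : ℕ) (hd : 2 ≤ d) (V : Matrix (Fin d) (Fin d) ℂ)
    (hVlow : ∀ i j : Fin d, (j : ℕ) < (i : ℕ) → V i j = 0)
    (hVdiag : ∀ i : Fin d, V i i = 1)
    (hVsup : ∀ i j : Fin d, (j : ℕ) = (i : ℕ) + 1 → V i j ≠ 0)
    (μ : Fin d → ℂ) (hμ : ∀ i, μ i ≠ 0)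
    (r c : ℝ)
    (hr : IsGreatest {x : ℝ | ∃ i j : Fin d, (j : ℕ) = (i : ℕ) + 1 ∧
      x = ‖μ j / μ i‖} r)
    (hc : IsLeast {x : ℝ | ∃ i j : Fin d, (j : ℕ) = (i : ℕ) + 1 ∧
      x = ‖V i j‖} c) :
    -- (a)
    r ≤ c⁻¹ * norm1 d ((Matrix.diagonal μ)⁻¹ * V * Matrix.diagonal μ - 1) ∧
    -- (b)
    (r ≤ 1 → norm1 d ((Matrix.diagonal μ)⁻¹ * V * Matrix.diagonal μ - 1) ≤ norm1 d V * r) ∧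
    -- consequence
    (∀ μs : ℕ → Fin d → ℂ, (∀ n i, μs n i ≠ 0) →
      (Filter.Tendsto (fun n => (Matrix.diagonal (μs n))⁻¹ * V * Matrix.diagonal (μs n))
          Filter.atTop (nhds 1) ↔
        ∀ i j : Fin d, (j : ℕ) = (i : ℕ) + 1 →
          Filter.Tendsto (fun n => μs n j / μs n i) Filter.atTop (nhds 0))) :=
  statement_19_general d V hVlow hVdiag hVsup μ hμ r c hr hc
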